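/- arXiv:2012.06247 — 2 statements merged into one kernel-verified Lean document; each statement's English description precedes it below -/
import Mathlib

section
/- For every polynomial P ∈ ℤ[X] with deg P ≥ 2 and every ε > 0 there exists a constant C = C(P, ε) > 0 such that for every integer N ≥ 1 and every nonzero integer z, the number of pairs (n_1, m_1) ∈ {1,…,N}^2 satisfying P(n_1) − P(m_1) = z is at most C · N^{ε}. -/
open Finset Polynomial

/-!
If `P n - P m = z`, then `d = n - m` divides `z`, so `d` takes at most `2 τ(|z|)` values. For each
`d`, `m` is a root of `P(X + d) - P(X) - z`. This polynomial is nonzero: for `d = 0` it is the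
constant `-z`, and otherwise its coefficient of `X ^ (k - 1)` is `k · lc(P) · d`, where
`k = deg P ≥ 2`. So each `d` contributes at most `k` pairs. Any solution forces `|z| ≪_P N ^ k`, and
the divisor bound `τ(n) ≪_δ n ^ δ` with `δ = ε / k` then gives `O(N ^ ε)`.
-/

lemma add_one_le_pow_of_two_le {x : ℝ} (hx : 2 ≤ x) (a : ℕ) : (a : ℝ) + 1 ≤ x ^ a :=
  calc (a : ℝ) + 1 ≤ 2 ^ a := by exact_mod_cast a.lt_two_pow_self
    _ ≤ x ^ a := pow_le_pow_left₀ zero_le_two hx a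

lemma add_one_le_mul_pow {y : ℝ} (hy : 1 < y) (a : ℕ) :
    (a : ℝ) + 1 ≤ (1 + (Real.log y)⁻¹) * y ^ a := by
  have hlog : 0 < Real.log y := Real.log_pos hy
  have h_one : 1 ≤ y ^ a := one_le_pow₀ hy.le
  have h_exp : a * Real.log y + 1 ≤ y ^ a := by
    rw [← Real.log_pow]
    exact (Real.add_one_le_exp _).trans (Real.exp_log (by positivity)).le
  have h_a : (a : ℝ) ≤ (Real.log y)⁻¹ * y ^ a := by
    rw [inv_mul_eq_div, le_div_iff₀ hlog]
    linarith
  rw [add_mul, one_mul]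
  linarith

lemma rpow_eq_prod_primeFactors {n : ℕ} (hn : n ≠ 0) (ε : ℝ) :
    (n : ℝ) ^ ε = ∏ p ∈ n.primeFactors, ((p : ℝ) ^ ε) ^ n.factorization p := by
  conv_lhs => rw [Nat.prod_primeFactors_pow_factorization hn]
  push_cast
  rw [← Real.finsetProd_rpow _ _ fun p _ => by positivity]
  exact prod_congr rfl fun p _ => (Real.rpow_pow_comm p.cast_nonneg ε _).symm

theorem exists_card_divisors_le_mul_rpow {ε : ℝ} (hε : 0 < ε) :
    ∃ C : ℝ, 0 < C ∧ ∀ n : ℕ, n ≠ 0 → (#n.divisors : ℝ) ≤ C * (n : ℝ) ^ ε := by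
  have hy : 1 < (2 : ℝ) ^ ε := Real.one_lt_rpow one_lt_two hε
  set M := 1 + (Real.log (2 ^ ε))⁻¹
  have hM : 1 ≤ M := le_add_of_nonneg_right (inv_nonneg.2 (Real.log_nonneg hy.le))
  set B := ⌈(2 : ℝ) ^ ε⁻¹⌉₊
  refine ⟨M ^ B, by positivity, fun n hn => ?_⟩
  -- only the primes below `B` can have `p ^ ε < 2`, and each of them costs at most a factor `M`
  have h_local : ∀ p ∈ n.primeFactors, (n.factorization p : ℝ) + 1 ≤
      (if p < B then M else 1) * ((p : ℝ) ^ ε) ^ n.factorization p := by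
    intro p hp
    have h2p : (2 : ℝ) ≤ p := by exact_mod_cast (Nat.prime_of_mem_primeFactors hp).two_le
    split_ifs with hpB
    · refine (add_one_le_mul_pow hy _).trans ?_
      gcongr
    · rw [one_mul]
      refine add_one_le_pow_of_two_le ?_ _
      calc (2 : ℝ) = ((2 : ℝ) ^ ε⁻¹) ^ ε := by
            rw [← Real.rpow_mul zero_le_two, inv_mul_cancel₀ hε.ne', Real.rpow_one]
        _ ≤ (p : ℝ) ^ ε := by gcongr; exact Nat.ceil_le.1 (not_lt.1 hpB)
  have h_card : #{p ∈ n.primeFactors | p < B} ≤ B :=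
    (card_le_card fun p hp => mem_range.2 (mem_filter.1 hp).2).trans (card_range B).le
  calc (#n.divisors : ℝ) = ∏ p ∈ n.primeFactors, ((n.factorization p : ℝ) + 1) := by
        rw [Nat.card_divisors hn]
        push_cast
        rfl
    _ ≤ ∏ p ∈ n.primeFactors, (if p < B then M else 1) * ((p : ℝ) ^ ε) ^ n.factorization p :=
        prod_le_prod (fun _ _ => by positivity) h_local
    _ = M ^ #{p ∈ n.primeFactors | p < B} * (n : ℝ) ^ ε := by
        rw [prod_mul_distrib, prod_ite, prod_const, prod_const_one, mul_one,
          rpow_eq_prod_primeFactors hn]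
    _ ≤ M ^ B * (n : ℝ) ^ ε := by gcongr

section TaylorDifference

variable {R : Type*} [CommRing R]

lemma coeff_taylor_sub_self_natDegree_sub_one (P : R[X]) (d : R) :
    (taylor d P - P).coeff (P.natDegree - 1) = P.natDegree * P.leadingCoeff * d := by
  set k := P.natDegree
  rcases Nat.eq_zero_or_pos k with hk | hk
  · rw [P.eq_C_of_natDegree_eq_zero hk]
    simp [k, hk]
  have h_deg : (hasseDeriv (k - 1) P).natDegree < 2 := by
    have := natDegree_hasseDeriv_le P (k - 1)
    omega
  have h_choose : k.choose (k - 1) = k := by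
    rw [Nat.choose_symm_of_eq_add (Nat.sub_add_cancel hk).symm, Nat.choose_one_right]
  rw [coeff_sub, taylor_coeff, eval_eq_sum_range' h_deg]
  simp only [sum_range_succ, sum_range_zero, hasseDeriv_coeff, zero_add,
    Nat.sub_add_cancel hk, h_choose, add_comm 1 (k - 1), Nat.choose_self]
  rw [leadingCoeff]
  ring

lemma natDegree_taylor_sub_self_sub_C_le (P : R[X]) (d z : R) :
    (taylor d P - P - C z).natDegree ≤ P.natDegree :=
  natDegree_sub_le_of_le (natDegree_sub_le_of_le (natDegree_taylor P d).le le_rfl)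
    (natDegree_C z).le |>.trans (by simp)

variable [IsDomain R] [CharZero R]

lemma taylor_sub_self_sub_C_ne_zero {P : R[X]} (hP : 2 ≤ P.natDegree) (d : R) {z : R}
    (hz : z ≠ 0) : taylor d P - P - C z ≠ 0 := by
  rcases eq_or_ne d 0 with rfl | hd
  · simpa using hz
  intro h
  have h_coeff := congrArg (coeff · (P.natDegree - 1)) h
  rw [coeff_sub, coeff_taylor_sub_self_natDegree_sub_one, coeff_C, if_neg (by omega), sub_zero,
    coeff_zero] at h_coeff
  have hP0 : P ≠ 0 := ne_zero_of_natDegree_gt hP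
  have hk : (P.natDegree : R) ≠ 0 := Nat.cast_ne_zero.2 (by omega)
  exact mul_ne_zero (mul_ne_zero hk (leadingCoeff_ne_zero.2 hP0)) hd h_coeff

lemma card_filter_sub_eq_le_natDegree [DecidableEq R] {P : R[X]} (hP : 2 ≤ P.natDegree)
    {z : R} (hz : z ≠ 0) (s : Finset (R × R)) (d : R) :
    #{t ∈ {t ∈ s | P.eval t.1 - P.eval t.2 = z} | t.1 - t.2 = d} ≤ P.natDegree := by
  set Q := taylor d P - P - C z
  have h_root : ∀ t ∈ {t ∈ {t ∈ s | P.eval t.1 - P.eval t.2 = z} | t.1 - t.2 = d},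
      t.2 ∈ Q.roots.toFinset := by
    intro t ht
    simp only [mem_filter] at ht
    rw [Multiset.mem_toFinset, mem_roots (taylor_sub_self_sub_C_ne_zero hP d hz), IsRoot,
      eval_sub, eval_sub, taylor_eval, eval_C, ← ht.2, add_sub_cancel, ht.1.2, sub_self]
  have h_inj : Set.InjOn Prod.snd
      (↑{t ∈ {t ∈ s | P.eval t.1 - P.eval t.2 = z} | t.1 - t.2 = d} : Set (R × R)) := by
    intro t ht u hu h
    simp only [mem_coe, mem_filter] at ht hu
    exact Prod.ext (by rw [← sub_add_cancel t.1 t.2, ← sub_add_cancel u.1 u.2, ht.2, hu.2, h]) h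
  calc _ ≤ #Q.roots.toFinset := card_le_card_of_injOn _ h_root h_inj
    _ ≤ Multiset.card Q.roots := Multiset.toFinset_card_le _
    _ ≤ P.natDegree := (card_roots' Q).trans (natDegree_taylor_sub_self_sub_C_le P d z)

end TaylorDifference

lemma Int.card_divisors (z : ℤ) : #z.divisors = 2 * #z.natAbs.divisors := by
  rw [Int.divisors, card_disjUnion, card_map, card_map, two_mul]

lemma abs_eval_le_of_abs_le {R : Type*} [CommRing R] [LinearOrder R] [IsStrictOrderedRing R]
    (P : R[X]) {x r : R} (hx : |x| ≤ r) (hr : 1 ≤ r) :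
    |P.eval x| ≤ (∑ i ∈ range (P.natDegree + 1), |P.coeff i|) * r ^ P.natDegree := by
  rw [eval_eq_sum_range, sum_mul]
  refine (abs_sum_le_sum_abs _ _).trans (sum_le_sum fun i hi => ?_)
  rw [abs_mul, abs_pow]
  gcongr
  calc |x| ^ i ≤ r ^ i := by gcongr
    _ ≤ r ^ P.natDegree := pow_le_pow_right₀ hr (Nat.lt_succ_iff.1 (mem_range.1 hi))

lemma abs_eval_sub_eval_le {R : Type*} [CommRing R] [LinearOrder R] [IsStrictOrderedRing R]
    (P : R[X]) {x y r : R} (hx : |x| ≤ r) (hy : |y| ≤ r) (hr : 1 ≤ r) :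
    |P.eval x - P.eval y| ≤
      2 * (∑ i ∈ range (P.natDegree + 1), |P.coeff i|) * r ^ P.natDegree := by
  linarith [abs_sub (P.eval x) (P.eval y), abs_eval_le_of_abs_le P hx hr,
    abs_eval_le_of_abs_le P hy hr]

lemma card_filter_eval_sub_eq_le {P : ℤ[X]} (hP : 2 ≤ P.natDegree) {z : ℤ} (hz : z ≠ 0)
    (s : Finset (ℤ × ℤ)) :
    #{t ∈ s | P.eval t.1 - P.eval t.2 = z} ≤ P.natDegree * (2 * #z.natAbs.divisors) := by
  rw [← Int.card_divisors]
  refine card_le_mul_card_image_of_maps_to (f := fun t => t.1 - t.2) (fun t ht => ?_) _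
    fun d _ => card_filter_sub_eq_le_natDegree hP hz s d
  rw [Int.mem_divisors, ← (mem_filter.1 ht).2]
  exact ⟨sub_dvd_eval_sub _ _ _, (mem_filter.1 ht).2 ▸ hz⟩

/-- for a polynomial P of degree ≥ 2 and any nonzero integer z, the
number of pairs (n₁, m₁) ∈ [1,N]² with P(n₁) − P(m₁) = z is O_{P,ε}(N^ε). -/
theorem stmt9 (P : Polynomial ℤ) (hP : 2 ≤ P.natDegree) (ε : ℝ) (hε : 0 < ε) :
    ∃ C : ℝ, 0 < C ∧ ∀ N : ℕ, 1 ≤ N → ∀ z : ℤ, z ≠ 0 →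
      ((((Finset.Icc (1:ℤ) (N:ℤ)) ×ˢ (Finset.Icc (1:ℤ) (N:ℤ))).filter
          (fun t => P.eval t.1 - P.eval t.2 = z)).card : ℝ) ≤ C * (N:ℝ) ^ ε := by
  set k := P.natDegree
  set H : ℤ := ∑ i ∈ range (k + 1), |P.coeff i|
  have hk : (0 : ℝ) < k := by exact_mod_cast (by omega : 0 < k)
  have hH : (0 : ℝ) ≤ H := by exact_mod_cast sum_nonneg fun i _ => abs_nonneg (P.coeff i)
  obtain ⟨C, hC, h_tau⟩ := exists_card_divisors_le_mul_rpow (div_pos hε hk)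
  refine ⟨2 * k * C * (2 * H + 1) ^ (ε / k), by positivity, fun N hN z hz => ?_⟩
  set S := ((Icc (1 : ℤ) N) ×ˢ (Icc (1 : ℤ) N)).filter (fun t => P.eval t.1 - P.eval t.2 = z)
  obtain hS | ⟨t, ht⟩ := S.eq_empty_or_nonempty
  · rw [hS, card_empty, Nat.cast_zero]
    positivity
  have h_z : (z.natAbs : ℝ) ≤ (2 * H + 1) * (N : ℝ) ^ k := by
    simp only [S, mem_filter, mem_product, mem_Icc] at ht
    obtain ⟨⟨⟨h₁, h₁'⟩, h₂, h₂'⟩, h_eq⟩ := ht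
    have h_int : |z| ≤ 2 * H * (N : ℤ) ^ k := h_eq ▸ abs_eval_sub_eval_le P
      (abs_le.2 ⟨by omega, h₁'⟩) (abs_le.2 ⟨by omega, h₂'⟩) (by exact_mod_cast hN)
    rw [Nat.cast_natAbs, Int.cast_abs]
    have : (|z| : ℝ) ≤ 2 * H * (N : ℝ) ^ k := by exact_mod_cast h_int
    nlinarith [pow_nonneg (Nat.cast_nonneg (α := ℝ) N) k]
  calc (#S : ℝ) ≤ k * (2 * #z.natAbs.divisors) := by
        exact_mod_cast card_filter_eval_sub_eq_le hP hz _
    _ ≤ k * (2 * (C * (z.natAbs : ℝ) ^ (ε / k))) := by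
        gcongr
        exact h_tau _ (Int.natAbs_ne_zero.2 hz)
    _ ≤ k * (2 * (C * ((2 * H + 1) * (N : ℝ) ^ k) ^ (ε / k))) := by gcongr
    _ = 2 * k * C * (2 * H + 1) ^ (ε / k) * (N : ℝ) ^ ε := by
        rw [Real.mul_rpow (by positivity) (by positivity), ← Real.rpow_natCast_mul N.cast_nonneg,
          mul_div_cancel₀ _ hk.ne']
        ring
end

section
/- Let d ≥ 2 and let γ(n) = (P_1(n),…,P_d(n)) be a polynomial curve in ℤ^d with separated degrees whose first component P_1 is a linear polynomial. Then there exists a constant C = C(γ) > 0 such that for every integer N ≥ 1 and all finite sets E, F ⊆ ℤ^d, #{(x,n) ∈ F × {1,…,N} : x − γ(n) ∈ E} ≤ C · N^{1/3} · |E|^{2/3} · |F|^{2/3} (i.e., the restricted weak-type ℓ^{3/2} → ℓ^3 estimate ⟨𝒜_N 1_E, 1_F⟩ ≤ C N^{−2/3} |E|^{2/3} |F|^{2/3} holds without any ε-loss). -/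
/-!
Let `T` count the incidences `x - γ(n) ∈ E` with `x ∈ F`, `1 ≤ n ≤ N`, and `s(x)` the number of
`n` with `x - γ(n) ∈ E`. By Cauchy–Schwarz, `T² ≤ |F| · ∑ₓ s(x)²`. The diagonal part of
`∑ₓ s(x)²` is `T`; an off-diagonal triple `(x, n₁, n₂)` is determined by `(n₁, n₂)`, and for a
given pair `(x - γ(n₁), x - γ(n₂)) ∈ E × E` there are at most `D = deg P₂` of them: the linear
coordinate fixes `n₁ - n₂ = c ≠ 0`, and then `n₁` is a root of `P₂(X) - P₂(X - c) - w`, which is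
nonzero because `deg P₂ ≥ 2`. So `T² ≤ |F| (D |E|² + T)`, and with `T ≤ |E| N` this gives
`T³ ≤ (2D + 1) N |E|² |F|²` when `|E| ≤ |F|`; reflecting the curve swaps the roles of `E` and `F`.
-/

open Finset Polynomial

lemma natDegree_le_one_of_eval_sub_eval_sub_eq {Q : ℤ[X]} {c w : ℤ} (hc : c ≠ 0)
    (h : ∀ y, Q.eval y - Q.eval (y - c) = w) : Q.natDegree ≤ 1 := by
  have h_arith : ∀ m : ℤ, Q.eval (c * m) = Q.eval 0 + w * m := by
    intro m
    induction m using Int.induction_on with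
    | zero => simp
    | succ k ih =>
      have := h (c * (k + 1))
      rw [show c * (k + 1) - c = c * k by ring] at this
      linarith
    | pred k ih =>
      have := h (c * (-k))
      rw [show c * -(k : ℤ) - c = c * (-k - 1) by ring] at this
      linarith
  have h_comp : Q.comp (C c * X) = C w * X + C (Q.eval 0) :=
    Polynomial.funext fun m => by simp [h_arith, add_comm]
  have h_deg : (Q.comp (C c * X)).natDegree = Q.natDegree := by
    rw [natDegree_comp, natDegree_C_mul_X c hc, mul_one]
  exact h_deg ▸ h_comp ▸ natDegree_linear_le

lemma card_filter_eval_sub_eval_sub_eq_le (I : Finset ℤ) {Q : ℤ[X]} (hQ : 2 ≤ Q.natDegree)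
    {c : ℤ} (hc : c ≠ 0) (w : ℤ) :
    #{n ∈ I | Q.eval n - Q.eval (n - c) = w} ≤ Q.natDegree := by
  set R := Q - Q.comp (X - C c) - C w
  have hR : R ≠ 0 := fun h0 => by
    have := natDegree_le_one_of_eval_sub_eval_sub_eq hc fun y => by
      simpa [R, sub_eq_zero, eval_comp] using congrArg (eval y) h0
    omega
  have hdeg : R.natDegree ≤ Q.natDegree := by
    refine (natDegree_sub_le _ _).trans (max_le ((natDegree_sub_le _ _).trans ?_) (by simp))
    rw [natDegree_comp, natDegree_X_sub_C, mul_one, max_self]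
  refine (card_le_degree_of_subset_roots fun n hn => ?_).trans hdeg
  rw [mem_roots hR]
  simp only [mem_val, mem_filter] at hn
  simp [R, eval_comp, ← hn.2]

lemma eval_sub_eval_of_natDegree_le_one {R : Type*} [CommRing R] {L : R[X]}
    (hL : L.natDegree ≤ 1) (m n : R) :
    L.eval m - L.eval n = L.coeff 1 * (m - n) := by
  conv_lhs => rw [eq_X_add_C_of_natDegree_le_one hL]
  simp only [eval_add, eval_mul, eval_C, eval_X]
  ring

lemma card_offDiag_filter_eval_sub_eq_le (I : Finset ℤ) {L Q : ℤ[X]} (hL : L.natDegree = 1)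
    (hQ : 2 ≤ Q.natDegree) (u w : ℤ) :
    #{q ∈ I.offDiag | L.eval q.1 - L.eval q.2 = u ∧ Q.eval q.1 - Q.eval q.2 = w}
      ≤ Q.natDegree := by
  set S := {q ∈ I.offDiag | L.eval q.1 - L.eval q.2 = u ∧ Q.eval q.1 - Q.eval q.2 = w}
  obtain hS | ⟨m, hm⟩ := S.eq_empty_or_nonempty
  · simp [hS]
  have ha : L.coeff 1 ≠ 0 := by
    rw [← hL]; exact coeff_ne_zero_of_eq_degree (degree_eq_natDegree (by rintro rfl; simp at hL))
  have hgap : ∀ q ∈ S, q.1 - q.2 = m.1 - m.2 := fun q hq => by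
    simp only [S, mem_filter] at hq hm
    apply mul_left_cancel₀ ha
    rw [← eval_sub_eval_of_natDegree_le_one hL.le, ← eval_sub_eval_of_natDegree_le_one hL.le,
      hq.2.1, hm.2.1]
  have hc : m.1 - m.2 ≠ 0 := sub_ne_zero.2 (mem_offDiag.1 (mem_filter.1 hm).1).2.2
  refine (card_le_card_of_injOn Prod.fst (fun q hq => ?_) fun q hq r hr hqr => ?_).trans
    (card_filter_eval_sub_eval_sub_eq_le I hQ hc w)
  · have h_gap := hgap q hq
    simp only [S, coe_filter, mem_offDiag, Set.mem_ofPred_eq] at hq ⊢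
    exact ⟨hq.1.1, by rw [← h_gap, sub_sub_cancel]; exact hq.2.2⟩
  · exact Prod.ext hqr (by linarith [hgap q hq, hgap r hr])

lemma card_offDiag_filter_curve_sub_eq_le {κ : Type*} [DecidableEq (κ → ℤ)] (P : κ → ℤ[X])
    {i₀ i₁ : κ}
    (h₀ : (P i₀).natDegree = 1) (h₁ : 2 ≤ (P i₁).natDegree) (I : Finset ℤ) (v : κ → ℤ) :
    #{q ∈ I.offDiag | (fun j => (P j).eval q.1) - (fun j => (P j).eval q.2) = v}
      ≤ (P i₁).natDegree :=
  (card_le_card (monotone_filter_right _ fun _ _ hq =>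
      ⟨congrFun hq i₀, congrFun hq i₁⟩)).trans
    (card_offDiag_filter_eval_sub_eq_le I h₀ h₁ (v i₀) (v i₁))

lemma pow_three_le_of_sq_le_mul {t n a b D : ℕ} (hsq : t ^ 2 ≤ a * (D * b ^ 2 + t))
    (ht : t ≤ b * n) (hba : b ≤ a) : t ^ 3 ≤ (2 * D + 1) * n * b ^ 2 * a ^ 2 := by
  rcases Nat.eq_zero_or_pos n with rfl | hn
  · simp_all
  have hb : b ≤ b ^ 2 := Nat.le_self_pow two_ne_zero b
  have h1 : t * (a * (D * b ^ 2)) ≤ D * n * b ^ 2 * a ^ 2 :=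
    calc t * (a * (D * b ^ 2)) ≤ b * n * (a * (D * b ^ 2)) := by gcongr
      _ = D * n * (b * b) * (a * b) := by ring
      _ ≤ D * n * b ^ 2 * a ^ 2 := by rw [sq, sq]; gcongr
  have h2 : a * t ^ 2 ≤ (D + 1) * n * b ^ 2 * a ^ 2 :=
    calc a * t ^ 2 ≤ a * (a * (D * b ^ 2 + t)) := by gcongr
      _ ≤ a * (a * (D * b ^ 2 * n + b * n)) := by
          gcongr a * (a * ?_); exact add_le_add (Nat.le_mul_of_pos_right _ hn) ht
      _ ≤ a * (a * (D * b ^ 2 * n + b ^ 2 * n)) := by gcongr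
      _ = (D + 1) * n * b ^ 2 * a ^ 2 := by ring
  calc t ^ 3 = t * t ^ 2 := by ring
    _ ≤ t * (a * (D * b ^ 2 + t)) := by gcongr
    _ = t * (a * (D * b ^ 2)) + a * t ^ 2 := by ring
    _ ≤ (2 * D + 1) * n * b ^ 2 * a ^ 2 := by nlinarith

lemma le_mul_rpow_of_pow_three_le {t K n a b : ℝ} (ht : 0 ≤ t) (hK : 0 ≤ K) (hn : 0 ≤ n)
    (ha : 0 ≤ a) (hb : 0 ≤ b) (h : t ^ 3 ≤ K * n * a ^ 2 * b ^ 2) :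
    t ≤ K ^ ((1 : ℝ) / 3) * n ^ ((1 : ℝ) / 3) * a ^ ((2 : ℝ) / 3) * b ^ ((2 : ℝ) / 3) := by
  have h_pow (x : ℝ) (hx : 0 ≤ x) : (x ^ 2) ^ ((1 : ℝ) / 3) = x ^ ((2 : ℝ) / 3) := by
    rw [← Real.rpow_natCast, ← Real.rpow_mul hx]; norm_num
  calc t = (t ^ 3) ^ ((1 : ℝ) / 3) := by
        rw [← Real.rpow_natCast, ← Real.rpow_mul ht]; norm_num
    _ ≤ (K * n * a ^ 2 * b ^ 2) ^ ((1 : ℝ) / 3) := by gcongr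
    _ = _ := by
        rw [Real.mul_rpow (by positivity) (by positivity),
          Real.mul_rpow (by positivity) (by positivity), Real.mul_rpow hK hn, h_pow a ha, h_pow b hb]

section Incidences

variable {G ι : Type*} [AddCommGroup G] [DecidableEq G]

def incidences (γ : ι → G) (A B : Finset G) (I : Finset ι) : Finset (G × ι) :=
  {z ∈ A ×ˢ I | z.1 - γ z.2 ∈ B}

lemma card_incidences_le (γ : ι → G) (A B : Finset G) (I : Finset ι) :
    #(incidences γ A B I) ≤ #B * #I := by
  rw [← card_product]
  refine card_le_card_of_injOn (fun z => (z.1 - γ z.2, z.2)) (fun z hz => ?_) fun z _ y _ h => ?_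
  · simp only [incidences, coe_filter, mem_product, Set.mem_ofPred_eq] at hz
    exact mem_product.2 ⟨hz.2, hz.1.2⟩
  · simp only [Prod.mk.injEq] at h
    exact Prod.ext (by simpa [h.2] using h.1) h.2

lemma card_incidences_neg (γ : ι → G) (A B : Finset G) (I : Finset ι) :
    #(incidences γ A B I) = #(incidences (-γ) B A I) := by
  refine card_nbij' (fun z => (z.1 - γ z.2, z.2)) (fun z => (z.1 + γ z.2, z.2))
    (fun z hz => ?_) (fun z hz => ?_) (fun z _ => by simp) fun z _ => by simp
  · simp only [incidences, coe_filter, mem_product, Set.mem_ofPred_eq] at hz ⊢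
    simpa [hz.1.2, hz.2] using hz.1.1
  · simp only [incidences, coe_filter, mem_product, Set.mem_ofPred_eq, Pi.neg_apply,
      sub_neg_eq_add] at hz ⊢
    simpa [hz.1.2, hz.2] using hz.1.1

lemma card_incidences_eq_sum (γ : ι → G) (A B : Finset G) (I : Finset ι) :
    #(incidences γ A B I) = ∑ x ∈ A, #{n ∈ I | x - γ n ∈ B} := by
  simp only [incidences, card_filter, sum_product]

variable {γ : ι → G} {I : Finset ι} {D : ℕ}

lemma sum_card_offDiag_filter_le (hγ : ∀ v, #{q ∈ I.offDiag | γ q.1 - γ q.2 = v} ≤ D)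
    (A B : Finset G) :
    ∑ x ∈ A, #{n ∈ I | x - γ n ∈ B}.offDiag ≤ D * #B ^ 2 := by
  rw [← card_sigma, sq, ← card_product]
  refine card_le_mul_card_image_of_maps_to (f := fun p => (p.1 - γ p.2.1, p.1 - γ p.2.2))
    (fun p hp => ?_) D fun b _ => ?_
  · simp only [mem_sigma, mem_offDiag, mem_filter] at hp
    exact mem_product.2 ⟨hp.2.1.2, hp.2.2.1.2⟩
  · refine (card_le_card_of_injOn (fun p => p.2) (fun p hp => ?_) fun p hp r hr h => ?_).trans
      (hγ (b.2 - b.1))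
    · simp only [coe_filter, mem_sigma, mem_offDiag, mem_filter, Set.mem_ofPred_eq] at hp ⊢
      obtain ⟨⟨-, ⟨hn₁, -⟩, ⟨hn₂, -⟩, hne⟩, rfl⟩ := hp
      exact ⟨⟨hn₁, hn₂, hne⟩, (sub_sub_sub_cancel_left _ _ _).symm⟩
    · simp only [coe_filter, Set.mem_ofPred_eq] at hp hr
      have hx := congrArg Prod.fst (hp.2.trans hr.2.symm)
      simp only [h, sub_left_inj] at hx
      exact Sigma.ext hx (heq_of_eq h)

lemma card_incidences_sq_le (hγ : ∀ v, #{q ∈ I.offDiag | γ q.1 - γ q.2 = v} ≤ D)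
    (A B : Finset G) :
    #(incidences γ A B I) ^ 2 ≤ #A * (D * #B ^ 2 + #(incidences γ A B I)) := by
  have h_sq (x : G) : #{n ∈ I | x - γ n ∈ B} ^ 2
      = #{n ∈ I | x - γ n ∈ B}.offDiag + #{n ∈ I | x - γ n ∈ B} := by
    rw [offDiag_card, sq, Nat.sub_add_cancel (Nat.le_mul_self _)]
  calc #(incidences γ A B I) ^ 2 ≤ #A * ∑ x ∈ A, #{n ∈ I | x - γ n ∈ B} ^ 2 := by
        rw [card_incidences_eq_sum]; exact sq_sum_le_card_mul_sum_sq
    _ = #A * (∑ x ∈ A, #{n ∈ I | x - γ n ∈ B}.offDiag + #(incidences γ A B I)) := by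
        simp only [h_sq, sum_add_distrib, card_incidences_eq_sum]
    _ ≤ #A * (D * #B ^ 2 + #(incidences γ A B I)) := by
        gcongr; exact sum_card_offDiag_filter_le hγ A B

lemma card_incidences_pow_three_le (hγ : ∀ v, #{q ∈ I.offDiag | γ q.1 - γ q.2 = v} ≤ D)
    (A B : Finset G) :
    #(incidences γ A B I) ^ 3 ≤ (2 * D + 1) * #I * #B ^ 2 * #A ^ 2 := by
  rcases le_total #B #A with hBA | hAB
  · exact pow_three_le_of_sq_le_mul (card_incidences_sq_le hγ A B) (card_incidences_le γ A B I) hBA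
  have hγ' (v : G) : #{q ∈ I.offDiag | (-γ) q.1 - (-γ) q.2 = v} ≤ D := by
    refine le_of_eq_of_le (congrArg card (filter_congr fun q _ => ?_)) (hγ (-v))
    rw [Pi.neg_apply, Pi.neg_apply, neg_sub_neg, ← neg_sub, neg_eq_iff_eq_neg]
  rw [card_incidences_neg]
  have := pow_three_le_of_sq_le_mul (card_incidences_sq_le hγ' B A)
    (card_incidences_le (-γ) B A I) hAB
  linarith

end Incidences

/-- ε-free restricted weak-type ℓ^{3/2} → ℓ^3 estimate for
discrete averages along a polynomial curve with separated degrees whose first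
component is linear, in dimension d ≥ 2. -/
theorem stmt14 (d : ℕ) (hd : 2 ≤ d) (P : Fin d → Polynomial ℤ)
    (hsep : ∀ i j : Fin d, i < j → (P i).natDegree < (P j).natDegree)
    (hlin : (P ⟨0, by omega⟩).natDegree = 1) :
    ∃ C : ℝ, 0 < C ∧ ∀ N : ℕ, 1 ≤ N → ∀ E F : Finset (Fin d → ℤ),
      (((F ×ˢ Finset.Icc (1:ℤ) (N:ℤ)).filter
          (fun z => (fun j => z.1 j - (P j).eval z.2) ∈ E)).card : ℝ) ≤
        C * (N:ℝ) ^ ((1:ℝ)/3) * (E.card:ℝ) ^ ((2:ℝ)/3) * (F.card:ℝ) ^ ((2:ℝ)/3) := by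
  have h₁ : 2 ≤ (P ⟨1, by omega⟩).natDegree := by
    have := hsep ⟨0, by omega⟩ ⟨1, by omega⟩ (Fin.mk_lt_mk.2 one_pos)
    omega
  set D := (P ⟨1, by omega⟩).natDegree
  refine ⟨(2 * D + 1 : ℝ) ^ ((1 : ℝ) / 3), by positivity, fun N _ E F => ?_⟩
  have h_cube := card_incidences_pow_three_le (γ := fun n j => (P j).eval n)
    (card_offDiag_filter_curve_sub_eq_le P hlin h₁ (Icc 1 (N : ℤ))) F E
  simp only [Int.card_Icc, add_sub_cancel_right, Int.toNat_natCast] at h_cube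
  exact le_mul_rpow_of_pow_three_le (by positivity) (by positivity) (by positivity)
    (by positivity) (by positivity) (by exact_mod_cast h_cube)
end
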